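/- For every graph G, fun(G) ≤ 2·cwd(G) − 1, where fun(G) is the functionality and cwd(G) is the clique-width of G. -/

import Mathlib

open scoped Classical

/-- `k`-expressions over a vertex type `V`: create a vertex with a label,
disjoint union, rename a label, or join two label classes completely. -/
inductive CWExpr (V : Type*) (k : ℕ) : Type _ where
  | single : V → Fin k → CWExpr V k
  | union : CWExpr V k → CWExpr V k → CWExpr V k
  | relabel : Fin k → Fin k → CWExpr V k → CWExpr V k
  | join : Fin k → Fin k → CWExpr V k → CWExpr V k

namespace CWExpr

variable {V : Type*} [DecidableEq V] {k : ℕ}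

/-- The set of vertices created by an expression. -/
def verts : CWExpr V k → Finset V
  | single v _ => {v}
  | union a b => verts a ∪ verts b
  | relabel _ _ a => verts a
  | join _ _ a => verts a

/-- The label of a vertex in the graph built by an expression. -/
def label : CWExpr V k → V → Fin k
  | single _ i, _ => i
  | union a b, v => if v ∈ verts a then label a v else label b v
  | relabel i j a, v => if label a v = i then j else label a v
  | join _ _ a, v => label a v

/-- The adjacency relation of the graph built by an expression. -/
def adj : CWExpr V k → V → V → Prop
  | single _ _, _, _ => False
  | union a b, u, v => adj a u v ∨ adj b u v
  | relabel _ _ a, u, v => adj a u v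
  | join i j a, u, v => adj a u v ∨
      (u ∈ verts a ∧ v ∈ verts a ∧ u ≠ v ∧
        ((label a u = i ∧ label a v = j) ∨ (label a u = j ∧ label a v = i)))

/-- Well-formedness: in a disjoint union the two parts use disjoint vertex sets,
and a vertex is created only once. -/
def OK : CWExpr V k → Prop
  | single _ _ => True
  | union a b => OK a ∧ OK b ∧ Disjoint (verts a) (verts b)
  | relabel _ _ a => OK a
  | join _ _ a => OK a

end CWExpr

/-- `cwd(G) ≤ k`: the graph `G` can be built by a well-formed `k`-expression. -/
def CliqueWidthLE {V : Type*} [DecidableEq V] [Fintype V] (G : SimpleGraph V) (k : ℕ) : Prop :=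
  ∃ e : CWExpr V k, e.OK ∧ e.verts = Finset.univ ∧ ∀ u v, G.Adj u v ↔ e.adj u v

open scoped Classical

/-- The Boolean adjacency indicator of a graph. -/
noncomputable def adjB {V : Type*} (G : SimpleGraph V) (x z : V) : Bool :=
  if G.Adj x z then true else false

/-- A vertex `y` is a function of the set `S` of vertices: there is a Boolean
function `f` of the variables indexed by `S` such that the adjacency of `y`
to any vertex `z` outside `{y} ∪ S` equals `f` applied to the adjacencies
of the members of `S` to `z`. -/
def FunctionOf {V : Type*} (G : SimpleGraph V) (y : V) (S : Finset V) : Prop :=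
  y ∉ S ∧ ∃ f : (S → Bool) → Bool, ∀ z, z ≠ y → z ∉ S →
    (G.Adj y z ↔ f (fun s => adjB G s.1 z) = true)

/-- `fun(y) ≤ k` : the functionality of vertex `y` is at most `k`. -/
def VertexFunLE {V : Type*} (G : SimpleGraph V) (y : V) (k : ℕ) : Prop :=
  ∃ S : Finset V, S.card ≤ k ∧ FunctionOf G y S


/-- `fun(G) ≤ k`: every (nonempty) induced subgraph of `G` has a vertex of
functionality at most `k`. -/
def GraphFunLE {V : Type*} (G : SimpleGraph V) (k : ℕ) : Prop :=
  ∀ W : Set V, W.Nonempty → ∃ y : W, VertexFunLE (G.induce W) y k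

/-! Vertices carrying the same label are treated alike by every later operation of a
`k`-expression. Go to the first subexpression in which two vertices of `W` share a label. If it is
a union or relabelling whose parts give distinct labels to their vertices of `W`, it contains at
most `2k` vertices of `W`, and no vertex outside it is adjacent to either of the two; so their
neighbourhoods in `W` differ on at most `2k - 2` other vertices, and the first one is a Boolean
function (in fact a copy) of the second together with those `2k - 2` vertices. -/

open Finset

namespace CWExpr

variable {V : Type*} [DecidableEq V] {k : ℕ}

theorem mem_verts_of_adj {e : CWExpr V k} {u v : V} (h : e.adj u v) :
    u ∈ e.verts ∧ v ∈ e.verts := by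
  induction e with
  | single => exact h.elim
  | union a b iha ihb =>
    rcases h with h | h
    · exact (iha h).imp (mem_union_left _) (mem_union_left _)
    · exact (ihb h).imp (mem_union_right _) (mem_union_right _)
  | relabel _ _ a ih => exact ih h
  | join _ _ a ih => exact h.elim ih fun h => ⟨h.1, h.2.1⟩

theorem card_le_of_injOn_label {e : CWExpr V k} {s : Finset V} (h : Set.InjOn e.label s) :
    #s ≤ k := by
  simpa using card_le_card_of_injOn e.label (t := univ) (fun x _ => mem_univ _) h

def HasNearTwins (e : CWExpr V k) (W : Finset V) : Prop :=
  ∃ u ∈ e.verts ∩ W, ∃ v ∈ e.verts ∩ W, u ≠ v ∧ e.label u = e.label v ∧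
    ∃ D : Finset V, #D ≤ 2 * k - 2 ∧
      ∀ z ∈ W, z ≠ u → z ≠ v → z ∉ D → (e.adj u z ↔ e.adj v z)

variable {W : Finset V}

/-- Outside `e.verts` neither vertex has a neighbour. -/
theorem hasNearTwins_of_card_le {e : CWExpr V k} (h : ¬ Set.InjOn e.label ↑(e.verts ∩ W))
    (hcard : #(e.verts ∩ W) ≤ 2 * k) : e.HasNearTwins W := by
  simp only [Set.InjOn, mem_coe, not_forall] at h
  obtain ⟨u, hu, v, hv, hl, huv : u ≠ v⟩ := h
  have hcardD : #(((e.verts ∩ W).erase u).erase v) ≤ 2 * k - 2 := by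
    rw [card_erase_of_mem (mem_erase.2 ⟨huv.symm, hv⟩), card_erase_of_mem hu]
    omega
  refine ⟨u, hu, v, hv, huv, hl, _, hcardD, fun z hz hzu hzv hzD => ?_⟩
  have hz : z ∉ e.verts := fun hze => hzD (by simp [hze, hz, hzu, hzv])
  exact iff_of_false (fun h => hz (mem_verts_of_adj h).2) (fun h => hz (mem_verts_of_adj h).2)

theorem HasNearTwins.of_agree {e e' : CWExpr V k} (h : e.HasNearTwins W)
    (hverts : e.verts ⊆ e'.verts) (hlabel : ∀ x ∈ e.verts, e'.label x = e.label x)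
    (hadj : ∀ x ∈ e.verts, ∀ z, e'.adj x z ↔ e.adj x z) : e'.HasNearTwins W := by
  obtain ⟨u, hu, v, hv, huv, hl, D, hD, htw⟩ := h
  have hu' := (mem_inter.1 hu).1
  have hv' := (mem_inter.1 hv).1
  refine ⟨u, inter_subset_inter_right hverts hu, v, inter_subset_inter_right hverts hv, huv,
    by rw [hlabel u hu', hlabel v hv', hl], D, hD, fun z hz hzu hzv hzD => ?_⟩
  rw [hadj u hu', hadj v hv']
  exact htw z hz hzu hzv hzD

theorem HasNearTwins.union_left {a : CWExpr V k} (b : CWExpr V k) (hab : Disjoint a.verts b.verts)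
    (h : a.HasNearTwins W) : (union a b).HasNearTwins W :=
  h.of_agree subset_union_left (fun _ hx => if_pos hx) fun _ hx _ =>
    or_iff_left fun hb => disjoint_left.1 hab hx (mem_verts_of_adj hb).1

theorem HasNearTwins.union_right (a : CWExpr V k) {b : CWExpr V k} (hab : Disjoint a.verts b.verts)
    (h : b.HasNearTwins W) : (union a b).HasNearTwins W :=
  h.of_agree subset_union_right (fun _ hx => if_neg (disjoint_right.1 hab hx)) fun _ hx _ =>
    or_iff_right fun ha => disjoint_right.1 hab hx (mem_verts_of_adj ha).1

theorem HasNearTwins.relabel {a : CWExpr V k} (i j : Fin k) (h : a.HasNearTwins W) :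
    (relabel i j a).HasNearTwins W := by
  obtain ⟨u, hu, v, hv, huv, hl, htw⟩ := h
  exact ⟨u, hu, v, hv, huv, by simp only [label, hl], htw⟩

theorem HasNearTwins.join {a : CWExpr V k} (i j : Fin k) (h : a.HasNearTwins W) :
    (join i j a).HasNearTwins W := by
  obtain ⟨u, hu, v, hv, huv, hl, D, hD, htw⟩ := h
  refine ⟨u, hu, v, hv, huv, hl, D, hD, fun z hz hzu hzv hzD => ?_⟩
  simp only [adj, htw z hz hzu hzv hzD, hl, (mem_inter.1 hu).1, (mem_inter.1 hv).1,
    Ne.symm hzu, Ne.symm hzv, ne_eq, not_false_eq_true, true_and]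

theorem hasNearTwins_of_not_injOn :
    ∀ {e : CWExpr V k}, e.OK → ¬ Set.InjOn e.label ↑(e.verts ∩ W) → e.HasNearTwins W
  | single _ _, _, h => (h fun x hx y hy _ => by simp_all [verts]).elim
  | union a b, ⟨ha, hb, hab⟩, h => by
    by_cases hia : Set.InjOn a.label ↑(a.verts ∩ W)
    · by_cases hib : Set.InjOn b.label ↑(b.verts ∩ W)
      · refine hasNearTwins_of_card_le h ?_
        calc #((union a b).verts ∩ W) = #(a.verts ∩ W ∪ b.verts ∩ W) := by
              rw [verts, union_inter_distrib_right]
          _ ≤ #(a.verts ∩ W) + #(b.verts ∩ W) := card_union_le _ _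
          _ ≤ 2 * k := by
              have := card_le_of_injOn_label hia
              have := card_le_of_injOn_label hib
              omega
      · exact (hasNearTwins_of_not_injOn (e := b) hb hib).union_right a hab
    · exact (hasNearTwins_of_not_injOn (e := a) ha hia).union_left b hab
  | relabel i j a, ha, h => by
    by_cases hia : Set.InjOn a.label ↑(a.verts ∩ W)
    · have := card_le_of_injOn_label hia
      exact hasNearTwins_of_card_le h (by simp only [verts]; omega)
    · exact (hasNearTwins_of_not_injOn (e := a) ha hia).relabel i j
  | join i j a, ha, h => (hasNearTwins_of_not_injOn (e := a) ha h).join i j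

end CWExpr

theorem adjB_eq_true {V : Type*} (G : SimpleGraph V) (x z : V) :
    adjB G x z = true ↔ G.Adj x z := by
  simp [adjB]

theorem VertexFunLE.mono {U : Type*} {H : SimpleGraph U} {y : U} {k l : ℕ}
    (h : VertexFunLE H y k) (hkl : k ≤ l) : VertexFunLE H y l :=
  let ⟨S, hS, hf⟩ := h
  ⟨S, hS.trans hkl, hf⟩

theorem vertexFunLE_card_sub_one {U : Type*} [Fintype U] (H : SimpleGraph U) (y : U) :
    VertexFunLE H y (Fintype.card U - 1) :=
  ⟨univ.erase y, by simp, notMem_erase _ _, fun _ => true,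
    fun z hzy hz => absurd (mem_erase.2 ⟨hzy, mem_univ z⟩) hz⟩

theorem vertexFunLE_succ_of_adj_iff {U : Type*} (H : SimpleGraph U) {y v : U} (hyv : y ≠ v)
    (D : Finset U) (h : ∀ z, z ≠ y → z ≠ v → z ∉ D → (H.Adj y z ↔ H.Adj v z)) :
    VertexFunLE H y (#D + 1) := by
  have hv : v ∈ insert v (D.erase y) := mem_insert_self _ _
  refine ⟨insert v (D.erase y), (card_insert_le _ _).trans (by grw [card_erase_le]),
    by simp [hyv], fun g => g ⟨v, hv⟩, fun z hzy hz => ?_⟩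
  simp only [mem_insert, mem_erase, not_or, not_and] at hz
  rw [adjB_eq_true]
  exact h z hzy hz.1 fun hzD => hz.2 hzy hzD

/-- `fun(G) ≤ 2 cwd(G) - 1`: if `G` has clique-width at most `k`, then the
functionality of `G` is at most `2k - 1`. -/
theorem stmt8 {V : Type*} [DecidableEq V] [Fintype V] (G : SimpleGraph V) (k : ℕ)
    (hcw : CliqueWidthLE G k) : GraphFunLE G (2 * k - 1) := by
  obtain ⟨e, he, hverts, hadj⟩ := hcw
  intro W hW
  by_cases hsmall : #W.toFinset ≤ k
  · obtain ⟨y, hy⟩ := hW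
    refine ⟨⟨y, hy⟩, (vertexFunLE_card_sub_one _ _).mono ?_⟩
    rw [← Set.toFinset_card]
    omega
  have hinj : ¬ Set.InjOn e.label ↑(e.verts ∩ W.toFinset) := fun h =>
    hsmall (by simpa [hverts] using CWExpr.card_le_of_injOn_label h)
  obtain ⟨u, hu, v, hv, huv, -, D, hD, htw⟩ := CWExpr.hasNearTwins_of_not_injOn he hinj
  have hk : 0 < k := (e.label u).pos
  have huW : u ∈ W := by simpa using (mem_inter.1 hu).2
  have hvW : v ∈ W := by simpa using (mem_inter.1 hv).2
  refine ⟨⟨u, huW⟩, (vertexFunLE_succ_of_adj_iff (v := ⟨v, hvW⟩) _ (by simpa using huv)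
    (D.subtype (· ∈ W)) fun z hzu hzv hzD => ?_).mono ?_⟩
  · rw [SimpleGraph.induce_adj, SimpleGraph.induce_adj, hadj, hadj]
    exact htw z (by simp) (by simpa [Subtype.ext_iff] using hzu)
      (by simpa [Subtype.ext_iff] using hzv) (by simpa using hzD)
  · grw [card_subtype, card_filter_le]
    omega
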